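/- arXiv:1410.2075 — 3 statements merged into one kernel-verified Lean document; each statement's English description precedes it below -/
import Mathlib

section
/- For any non-complete graph G with |⋂𝒞(G)| ≥ |𝒞(G)|, the square of the trunk T(G) satisfies G ≅ T(G)² ⊕ K_r, where r = |⋂𝒞(G)| − |𝒞(G)| and ⊕ denotes the join. -/
open SimpleGraph

/-- The square of a graph: join distinct vertices at distance at most 2. -/
def Gsq {V : Type} (H : SimpleGraph V) : SimpleGraph V where
  Adj u v := u ≠ v ∧ (H.Adj u v ∨ ∃ w, H.Adj u w ∧ H.Adj w v)
  symm := ⟨by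
    rintro u v ⟨h1, h2⟩
    refine ⟨h1.symm, ?_⟩
    rcases h2 with h | ⟨w, hw1, hw2⟩
    · exact Or.inl h.symm
    · exact Or.inr ⟨w, hw2.symm, hw1.symm⟩⟩
  loopless := ⟨fun v h => h.1 rfl⟩

/-- `C`, `I` form a split partition of `H`: `C` a clique, `I` independent. -/
def IsSplitPart {V : Type} (H : SimpleGraph V) (C I : Set V) : Prop :=
  C ∪ I = Set.univ ∧ Disjoint C I ∧ H.IsClique C ∧ ∀ a ∈ I, ∀ b ∈ I, ¬ H.Adj a b

/-- `H` is a split graph. -/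
def IsSplit {V : Type} (H : SimpleGraph V) : Prop := ∃ C I, IsSplitPart H C I

/-- The set of inclusion-maximal cliques of `G`. -/
def maxCliques {V : Type} (G : SimpleGraph V) : Set (Set V) :=
  {Q | G.IsClique Q ∧ ∀ R, G.IsClique R → Q ⊆ R → Q = R}

/-- The intersection of all maximal cliques of `G`. -/
def core {V : Type} (G : SimpleGraph V) : Set V := ⋂₀ maxCliques G

/-- The condition `|⋂𝒞(G)| ≥ |𝒞(G)|`. -/
def cliqueIneq {V : Type} (G : SimpleGraph V) : Prop :=
  (maxCliques G).ncard ≤ (core G).ncard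

/-- `G` contains an induced copy of `F`. -/
def InducedCopy {α V : Type} (F : SimpleGraph α) (G : SimpleGraph V) : Prop :=
  ∃ f : α ↪ V, ∀ a b, F.Adj a b ↔ G.Adj (f a) (f b)

/-- The `ℓ`-sun: independent set `inl i`, clique `inr i`, with `inl i` adjacent
to exactly `inr i` and `inr (i+1)` (mod ℓ). -/
def sunGraph (ℓ : ℕ) : SimpleGraph (Fin ℓ ⊕ Fin ℓ) :=
  SimpleGraph.fromRel (fun a b =>
    match a, b with
    | .inr _, .inr _ => True
    | .inl i, .inr j => j.val = i.val ∨ j.val = (i.val + 1) % ℓ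
    | _, _ => False)

/-- `H` contains no induced 3-sun. -/
def Sun3Free {V : Type} (H : SimpleGraph V) : Prop := ¬ InducedCopy (sunGraph 3) H

/-- `H` contains no induced odd sun. -/
def OddSunFree {V : Type} (H : SimpleGraph V) : Prop :=
  ∀ ℓ, 3 ≤ ℓ → Odd ℓ → ¬ InducedCopy (sunGraph ℓ) H

/-- The cycle on `n` vertices. -/
def cycleG (n : ℕ) : SimpleGraph (Fin n) :=
  SimpleGraph.fromRel (fun i j => j.val = (i.val + 1) % n)

/-- `G` is chordal: no induced cycle of length at least 4. -/
def Chordal {V : Type} (G : SimpleGraph V) : Prop :=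
  ∀ n, 4 ≤ n → ¬ InducedCopy (cycleG n) G

/-- `G` is strongly chordal: chordal and `ℓ`-sun-free for all `ℓ ≥ 3`. -/
def StronglyChordal {V : Type} (G : SimpleGraph V) : Prop :=
  Chordal G ∧ ∀ ℓ, 3 ≤ ℓ → ¬ InducedCopy (sunGraph ℓ) G

/-- The trunk `T(G)`: a split graph whose clique is `𝒞(G)` and whose
independent set is `V(G) \ ⋂𝒞(G)`, with `v` adjacent to `Q` iff `v ∈ Q`. -/
def trunk {V : Type} (G : SimpleGraph V) :
    SimpleGraph (↥(maxCliques G) ⊕ ↥{v : V | v ∉ core G}) :=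
  SimpleGraph.fromRel (fun a b =>
    match a, b with
    | .inl _, .inl _ => True
    | .inl Q, .inr v => (v : V) ∈ (Q : Set V)
    | _, _ => False)

/-- The join of two graphs. -/
def joinG {α β : Type} (G : SimpleGraph α) (H : SimpleGraph β) : SimpleGraph (α ⊕ β) :=
  SimpleGraph.fromRel (fun a b =>
    match a, b with
    | .inl x, .inl y => G.Adj x y
    | .inr x, .inr y => H.Adj x y
    | .inl _, .inr _ => True
    | _, _ => False)

/-- The vertex-to-maximal-clique incidence bipartite graph of `G`. -/
def incidence {V : Type} (G : SimpleGraph V) : SimpleGraph (V ⊕ ↥(maxCliques G)) :=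
  SimpleGraph.fromRel (fun a b =>
    match a, b with
    | .inl v, .inr Q => v ∈ (Q : Set V)
    | _, _ => False)

/-- `G` is balanced: its vertex-to-maximal-clique incidence graph has no induced
cycle of length `2k` for odd `k ≥ 3`. -/
def BalancedGraph {V : Type} (G : SimpleGraph V) : Prop :=
  ∀ k, 3 ≤ k → Odd k → ¬ InducedCopy (cycleG (2 * k)) (incidence G)

/-- `G` is clique-Helly: every nonempty pairwise intersecting family of maximal
cliques has a common vertex. -/
def CliqueHelly {V : Type} (G : SimpleGraph V) : Prop :=
  ∀ S ⊆ maxCliques G, S.Nonempty →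
    (∀ Q ∈ S, ∀ R ∈ S, (Q ∩ R).Nonempty) → (⋂₀ S).Nonempty

/-- `G` is hereditary clique-Helly. -/
def HCH {V : Type} (G : SimpleGraph V) : Prop :=
  ∀ S : Set V, CliqueHelly (G.induce S)

/-- Adding an apex vertex adjacent exactly to the vertices of `C`. -/
def addApex {V : Type} (H : SimpleGraph V) (C : Set V) : SimpleGraph (Option V) :=
  SimpleGraph.fromRel (fun a b =>
    match a, b with
    | some x, some y => H.Adj x y
    | none, some y => y ∈ C
    | _, _ => False)

/-- A class of graphs is hereditary if it is closed under induced subgraphs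
(up to isomorphism). -/
def Hereditary (𝒢 : ∀ α : Type, SimpleGraph α → Prop) : Prop :=
  ∀ (α β : Type) (F : SimpleGraph α) (G : SimpleGraph β),
    𝒢 β G → InducedCopy F G → 𝒢 α F

/-- A class `𝒢` is simple: every `H ∈ 𝒢` can be mapped to some `H' ∈ 𝒢` with
`H'² ≅ H² ⊕ K₁`. -/
def SimpleClass (𝒢 : ∀ α : Type, SimpleGraph α → Prop) : Prop :=
  ∀ (α : Type) (H : SimpleGraph α), 𝒢 α H →
    ∃ (β : Type) (H' : SimpleGraph β), 𝒢 β H' ∧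
      Nonempty (Gsq H' ≃g joinG (Gsq H) (⊤ : SimpleGraph (Fin 1)))

/-- The Hajós-type graphs `G₁,…,G₄` (`hajos 0 = G₁`, …, `hajos 3 = G₄`): the
3-sun with `k` additional edges among its degree-2 vertices. -/
def hajos (k : ℕ) : SimpleGraph (Fin 3 ⊕ Fin 3) :=
  SimpleGraph.fromRel (fun a b =>
    match a, b with
    | .inr _, .inr _ => True
    | .inl i, .inr j => j.val = i.val ∨ j.val = (i.val + 1) % 3
    | .inl i, .inl j => (i.val = 0 ∧ j.val = 1 ∧ 1 ≤ k) ∨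
        (i.val = 1 ∧ j.val = 2 ∧ 2 ≤ k) ∨ (i.val = 0 ∧ j.val = 2 ∧ 3 ≤ k)
    | _, _ => False)
section AuxLemmas

variable {V : Type} [Fintype V] (G : SimpleGraph V)

lemma exists_maxClique_sup {s : Set V} (hs : G.IsClique s) :
    ∃ Q ∈ maxCliques G, s ⊆ Q := by
  classical
  have hfin : {R : Set V | G.IsClique R ∧ s ⊆ R}.Finite := Set.toFinite _
  obtain ⟨Q, hQ, hmax⟩ := hfin.exists_maximalFor id _ ⟨s, hs, subset_rfl⟩
  refine ⟨Q, ⟨hQ.1, fun R hR hQR => ?_⟩, hQ.2⟩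
  exact hQR.antisymm (hmax ⟨hR, hQ.2.trans hQR⟩ hQR)

lemma mem_maxClique (v : V) : ∃ Q ∈ maxCliques G, v ∈ Q := by
  obtain ⟨Q, hQ, hsub⟩ := exists_maxClique_sup G (G.isClique_singleton v)
  exact ⟨Q, hQ, hsub rfl⟩

lemma core_adj {c v : V} (hc : c ∈ core G) (hne : c ≠ v) : G.Adj c v := by
  obtain ⟨Q, hQ, hv⟩ := mem_maxClique G v
  exact (hQ.1) (hc Q hQ) hv hne

lemma adj_iff_shared {u v : V} :
    G.Adj u v ↔ u ≠ v ∧ ∃ Q ∈ maxCliques G, u ∈ Q ∧ v ∈ Q := by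
  constructor
  · intro hadj
    refine ⟨hadj.ne, ?_⟩
    have hcl : G.IsClique {u, v} := by
      intro a ha b hb hne
      simp only [Set.mem_insert_iff, Set.mem_singleton_iff] at ha hb
      rcases ha with rfl | rfl <;> rcases hb with rfl | rfl
      · exact absurd rfl hne
      · exact hadj
      · exact hadj.symm
      · exact absurd rfl hne
    obtain ⟨Q, hQ, hsub⟩ := exists_maxClique_sup G hcl
    exact ⟨Q, hQ, hsub (by simp), hsub (by simp)⟩
  · rintro ⟨hne, Q, hQ, hu, hv⟩
    exact hQ.1 hu hv hne

end AuxLemmas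

theorem square_trunk_join {V : Type} [Fintype V] (G : SimpleGraph V)
    (hconn : G.Connected) (hnc : G ≠ ⊤) (h : cliqueIneq G) :
    Nonempty (G ≃g joinG (Gsq (trunk G))
      (⊤ : SimpleGraph (Fin ((core G).ncard - (maxCliques G).ncard)))) := by
  classical
  set r := (core G).ncard - (maxCliques G).ncard with hr
  haveI : Fintype ↥(core G) := Fintype.ofFinite _
  haveI : Fintype ↥(maxCliques G) := Fintype.ofFinite _
  have hle : (maxCliques G).ncard ≤ (core G).ncard := h
  have hcard : Fintype.card ↥(core G) = Fintype.card (↥(maxCliques G) ⊕ Fin r) := by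
    have h1 : Fintype.card ↥(core G) = (core G).ncard := by
      rw [← Nat.card_coe_set_eq, Nat.card_eq_fintype_card]
    have h2 : Fintype.card ↥(maxCliques G) = (maxCliques G).ncard := by
      rw [← Nat.card_coe_set_eq, Nat.card_eq_fintype_card]
    simp only [Fintype.card_sum, Fintype.card_fin, h1, h2, hr]
    omega
  set I : Set V := {v : V | v ∉ core G} with hI
  let e0 : ↥(core G) ≃ ↥(maxCliques G) ⊕ Fin r := Fintype.equivOfCardEq hcard
  let e1 : V ≃ ↥(core G) ⊕ ↥I := (Equiv.Set.sumCompl (core G)).symm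
  let sh : (↥(maxCliques G) ⊕ Fin r) ⊕ ↥I ≃ (↥(maxCliques G) ⊕ ↥I) ⊕ Fin r :=
    (Equiv.sumAssoc _ _ _).trans (((Equiv.refl _).sumCongr (Equiv.sumComm _ _)).trans
      (Equiv.sumAssoc _ _ _).symm)
  let φ : V ≃ (↥(maxCliques G) ⊕ ↥I) ⊕ Fin r :=
    e1.trans ((e0.sumCongr (Equiv.refl ↥I)).trans sh)
  set T := joinG (Gsq (trunk G)) (⊤ : SimpleGraph (Fin r)) with hT
  -- computation lemmas for φ
  have hφI : ∀ (v : V) (hv : v ∉ core G), φ v = Sum.inl (Sum.inr ⟨v, hv⟩) := by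
    intro v hv
    have h1 : e1 v = Sum.inr ⟨v, hv⟩ := Equiv.Set.sumCompl_symm_apply_of_notMem hv
    simp [φ, sh, h1, Equiv.sumCongr_apply, Equiv.sumAssoc, Equiv.sumComm]
  have hφC : ∀ (v : V) (hv : v ∈ core G), (∃ Q, φ v = Sum.inl (Sum.inl Q)) ∨
      (∃ k, φ v = Sum.inr k) := by
    intro v hv
    have h1 : e1 v = Sum.inl ⟨v, hv⟩ := Equiv.Set.sumCompl_symm_apply_of_mem hv
    rcases he : e0 ⟨v, hv⟩ with Q | k
    · exact Or.inl ⟨Q, by simp [φ, sh, h1, he, Equiv.sumAssoc, Equiv.sumComm]⟩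
    · exact Or.inr ⟨k, by simp [φ, sh, h1, he, Equiv.sumAssoc, Equiv.sumComm]⟩
  have hφnI : ∀ (v : V) (hv : v ∈ core G) (w : ↥I), φ v ≠ Sum.inl (Sum.inr w) := by
    intro v hv w hEq
    have h2 : φ (w : V) = Sum.inl (Sum.inr ⟨(w : V), w.prop⟩) := hφI _ w.prop
    have : φ v = φ (w : V) := by rw [hEq, h2]
    have : v = (w : V) := φ.injective this
    exact w.prop (this ▸ hv)
  -- adjacency in the trunk / its square
  have hTrunkCC : ∀ (Q R : ↥(maxCliques G)), Q ≠ R →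
      (trunk G).Adj (Sum.inl Q) (Sum.inl R) := by
    intro Q R hne
    exact (SimpleGraph.fromRel_adj _ _ _).2 ⟨by simpa using hne, Or.inl trivial⟩
  have hTrunkCI : ∀ (Q : ↥(maxCliques G)) (w : ↥I), (w : V) ∈ (Q : Set V) →
      (trunk G).Adj (Sum.inl Q) (Sum.inr w) := by
    intro Q w hw
    exact (SimpleGraph.fromRel_adj _ _ _).2 ⟨by simp, Or.inl hw⟩
  have hQI : ∀ (Q : ↥(maxCliques G)) (w : ↥I),
      (Gsq (trunk G)).Adj (Sum.inl Q) (Sum.inr w) := by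
    intro Q w
    refine ⟨by simp, ?_⟩
    obtain ⟨R, hR, hvR⟩ := mem_maxClique G (w : V)
    by_cases hQR : Q = ⟨R, hR⟩
    · exact Or.inl (hTrunkCI Q w (by rw [hQR]; exact hvR))
    · exact Or.inr ⟨Sum.inl ⟨R, hR⟩, hTrunkCC _ _ hQR,
        (hTrunkCI ⟨R, hR⟩ w hvR)⟩
  have hII : ∀ u w : ↥I, (Gsq (trunk G)).Adj (Sum.inr u) (Sum.inr w) ↔
      G.Adj (u : V) (w : V) := by
    intro u w
    constructor
    · rintro ⟨hne, hor | ⟨m, hm1, hm2⟩⟩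
      · rcases (SimpleGraph.fromRel_adj _ _ _).1 hor with ⟨-, hf | hf⟩ <;> exact hf.elim
      · rcases m with Q | w'
        · have hu : (u : V) ∈ (Q : Set V) := by
            rcases (SimpleGraph.fromRel_adj _ _ _).1 hm1 with ⟨-, hf | hf⟩
            · exact hf.elim
            · exact hf
          have hw : (w : V) ∈ (Q : Set V) := by
            rcases (SimpleGraph.fromRel_adj _ _ _).1 hm2 with ⟨-, hf | hf⟩
            · exact hf
            · exact hf.elim
          have hval : (u : V) ≠ (w : V) := by
            intro hv; exact hne (by rw [Subtype.coe_injective hv])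
          exact (adj_iff_shared G).2 ⟨hval, Q, Q.prop, hu, hw⟩
        · rcases (SimpleGraph.fromRel_adj _ _ _).1 hm1 with ⟨-, hf | hf⟩ <;> exact hf.elim
    · intro hadj
      obtain ⟨hne, Q, hQ, hu, hw⟩ := (adj_iff_shared G).1 hadj
      refine ⟨by simpa [Sum.inr.injEq] using fun hc => hne (congrArg Subtype.val hc), ?_⟩
      refine Or.inr ⟨Sum.inl ⟨Q, hQ⟩, ?_, hTrunkCI ⟨Q, hQ⟩ w hw⟩
      exact (SimpleGraph.fromRel_adj _ _ _).2 ⟨by simp, Or.inr hu⟩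
  -- adjacency in T from a "core-type" vertex
  have hAdjCore : ∀ x y : (↥(maxCliques G) ⊕ ↥I) ⊕ Fin r,
      (∀ w, x ≠ Sum.inl (Sum.inr w)) → x ≠ y → T.Adj x y := by
    intro x y hx hxy
    rcases x with (Q | w) | k
    · rcases y with (R | w') | k'
      · refine (SimpleGraph.fromRel_adj _ _ _).2 ⟨hxy, Or.inl ?_⟩
        refine ⟨by simpa using fun hc => hxy (by rw [hc]), Or.inl (hTrunkCC Q R ?_)⟩
        intro hc; exact hxy (by rw [hc])
      · exact (SimpleGraph.fromRel_adj _ _ _).2 ⟨hxy, Or.inl (hQI Q w')⟩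
      · exact (SimpleGraph.fromRel_adj _ _ _).2 ⟨hxy, Or.inl trivial⟩
    · exact absurd rfl (hx w)
    · rcases y with z | k'
      · exact (SimpleGraph.fromRel_adj _ _ _).2 ⟨hxy, Or.inr trivial⟩
      · refine (SimpleGraph.fromRel_adj _ _ _).2 ⟨hxy, Or.inl ?_⟩
        simpa using fun hc => hxy (by rw [hc])
  -- the isomorphism
  refine ⟨⟨φ, ?_⟩⟩
  intro a b
  show T.Adj (φ a) (φ b) ↔ G.Adj a b
  have key : ∀ c d : V, c ∈ core G → (T.Adj (φ c) (φ d) ↔ G.Adj c d) := by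
    intro c d hc
    constructor
    · intro hT'
      exact core_adj G hc (fun hcd => hT'.ne (by rw [hcd]))
    · intro hadj
      exact hAdjCore _ _ (hφnI c hc) (fun hc' => hadj.ne (φ.injective hc'))
  by_cases ha : a ∈ core G
  · exact key a b ha
  by_cases hb : b ∈ core G
  · rw [SimpleGraph.adj_comm]
    rw [G.adj_comm a b]
    exact key b a hb
  · rw [hφI a ha, hφI b hb]
    constructor
    · rintro ⟨hne, hor | hor⟩
      · exact (hII _ _).1 hor
      · exact ((hII _ _).1 hor).symm
    · intro hadj
      have h1 := (hII ⟨a, ha⟩ ⟨b, hb⟩).2 hadj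
      exact (SimpleGraph.fromRel_adj _ _ _).2 ⟨fun hc => h1.ne (Sum.inl.inj hc), Or.inl h1⟩
end

section
/- Let G = H² for a connected 3-sun-free split graph H. Then |⋂𝒞(G)| ≥ |𝒞(G)| and H contains the trunk T(G) as an induced subgraph; moreover, if |⋂𝒞(G)| = |𝒞(G)|, then H ≅ T(G). -/
open SimpleGraph

section AuxTrunk

variable {V : Type}

/-- From a witnessed 3-sun configuration, derive a contradiction with 3-sun-freeness. -/
lemma sun_of_config (H : SimpleGraph V) (hfree : Sun3Free H)
    (u1 u2 u3 a b c : V)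
    (hab : H.Adj a b) (hac : H.Adj a c) (hbc : H.Adj b c)
    (h12 : ¬ H.Adj u1 u2) (h13 : ¬ H.Adj u1 u3) (h23 : ¬ H.Adj u2 u3)
    (n12 : u1 ≠ u2) (n13 : u1 ≠ u3) (n23 : u2 ≠ u3)
    (d1a : u1 ≠ a) (d1b : u1 ≠ b) (d1c : u1 ≠ c)
    (d2a : u2 ≠ a) (d2b : u2 ≠ b) (d2c : u2 ≠ c)
    (d3a : u3 ≠ a) (d3b : u3 ≠ b) (d3c : u3 ≠ c)
    (h1b : H.Adj u1 b) (h1c : H.Adj u1 c) (h1a : ¬ H.Adj u1 a)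
    (h2a : H.Adj u2 a) (h2c : H.Adj u2 c) (h2b : ¬ H.Adj u2 b)
    (h3a : H.Adj u3 a) (h3b : H.Adj u3 b) (h3c : ¬ H.Adj u3 c) : False := by
  apply hfree
  refine ⟨⟨fun x => match x with
    | .inl i => if i = 0 then u1 else if i = 1 then u2 else u3
    | .inr j => if j = 0 then b else if j = 1 then c else a, ?_⟩, ?_⟩
  · rintro (i|i) (j|j) h <;> fin_cases i <;> fin_cases j <;> simp_all
  · rintro (i|i) (j|j) <;> fin_cases i <;> fin_cases j <;>
      constructor <;> intro h <;>
      simp_all [sunGraph, SimpleGraph.fromRel_adj] <;>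
      first | omega | solve_by_elim [SimpleGraph.Adj.symm]

/-- Helly property for neighbourhoods of independent vertices in a
3-sun-free split graph. -/
lemma helly_of_sun3Free (H : SimpleGraph V) (C I : Set V)
    (hfree : Sun3Free H)
    (hunion : C ∪ I = Set.univ) (hdisj : Disjoint C I)
    (hclC : H.IsClique C) (hindep : ∀ a ∈ I, ∀ b ∈ I, ¬ H.Adj a b)
    (hCne : C.Nonempty) :
    ∀ S : Finset V, ↑S ⊆ I →
      (∀ u ∈ S, ∀ v ∈ S, ∃ c, H.Adj c u ∧ H.Adj c v) →
      ∃ c ∈ C, ∀ u ∈ S, H.Adj c u := by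
  classical
  have hmem : ∀ x : V, x ∈ C ∨ x ∈ I := by
    intro x
    have : x ∈ C ∪ I := by rw [hunion]; trivial
    exact this
  have nbrC : ∀ {c u : V}, u ∈ I → H.Adj c u → c ∈ C := by
    intro c u hu hadj
    rcases hmem c with h | h
    · exact h
    · exact absurd hadj (hindep c h u hu)
  have hne_IC : ∀ {x y : V}, x ∈ I → y ∈ C → x ≠ y := by
    intro x y hx hy h
    subst h
    exact Set.disjoint_left.mp hdisj hy hx
  intro S
  induction S using Finset.strongInduction with
  | _ S ih =>
    intro hSI hpair
    rcases Nat.lt_or_ge S.card 3 with hlt | hge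
    · -- small cases
      rcases Finset.eq_empty_or_nonempty S with rfl | ⟨u, hu⟩
      · exact ⟨hCne.choose, hCne.choose_spec, by simp⟩
      · by_cases hex : ∃ v ∈ S, v ≠ u
        · obtain ⟨v, hv, hvu⟩ := hex
          obtain ⟨c, hcu, hcv⟩ := hpair u hu v hv
          refine ⟨c, nbrC (hSI hu) hcu, ?_⟩
          have hsub : ({u, v} : Finset V) ⊆ S := by
            intro x hx
            rcases Finset.mem_insert.mp hx with rfl | hx
            · exact hu
            · rwa [Finset.mem_singleton.mp hx]
          have hc2 : ({u, v} : Finset V).card = 2 := by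
            rw [Finset.card_insert_of_notMem (by simp [hvu.symm]),
              Finset.card_singleton]
          have hSuv : S = {u, v} :=
            (Finset.eq_of_subset_of_card_le hsub (by omega)).symm
          intro w hw
          rw [hSuv] at hw
          rcases Finset.mem_insert.mp hw with rfl | hw
          · exact hcu
          · rw [Finset.mem_singleton.mp hw]; exact hcv
        · push_neg at hex
          obtain ⟨c, hcu, -⟩ := hpair u hu u hu
          exact ⟨c, nbrC (hSI hu) hcu, fun w hw => (hex w hw) ▸ hcu⟩
    · -- big case
      have hcard1 : 1 < S.card := by omega
      obtain ⟨p, hpS, q, hqS, hpq⟩ := Finset.one_lt_card.mp hcard1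
      have hSpss : S.erase p ⊂ S := Finset.erase_ssubset hpS
      have hSqss : S.erase q ⊂ S := Finset.erase_ssubset hqS
      obtain ⟨a, haC, haAdj⟩ := ih (S.erase p) hSpss
        (fun x hx => hSI (Finset.erase_subset _ _ hx))
        (fun u hu v hv => hpair u (Finset.erase_subset _ _ hu) v (Finset.erase_subset _ _ hv))
      obtain ⟨b, hbC, hbAdj⟩ := ih (S.erase q) hSqss
        (fun x hx => hSI (Finset.erase_subset _ _ hx))
        (fun u hu v hv => hpair u (Finset.erase_subset _ _ hu) v (Finset.erase_subset _ _ hv))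
      obtain ⟨c0, hc0p, hc0q⟩ := hpair p hpS q hqS
      have hc0C : c0 ∈ C := nbrC (hSI hpS) hc0p
      by_cases hA : ∀ u ∈ S, H.Adj a u
      · exact ⟨a, haC, hA⟩
      by_cases hB : ∀ u ∈ S, H.Adj b u
      · exact ⟨b, hbC, hB⟩
      by_cases hC0 : ∀ u ∈ S, H.Adj c0 u
      · exact ⟨c0, hc0C, hC0⟩
      push_neg at hA hB hC0
      obtain ⟨u1, hu1S, hu1⟩ := hA
      obtain ⟨u2, hu2S, hu2⟩ := hB
      obtain ⟨u3, hu3S, hu3⟩ := hC0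
      have hu1p : u1 = p := by
        by_contra h
        exact hu1 (haAdj u1 (Finset.mem_erase.mpr ⟨h, hu1S⟩))
      have hu2q : u2 = q := by
        by_contra h
        exact hu2 (hbAdj u2 (Finset.mem_erase.mpr ⟨h, hu2S⟩))
      rw [hu1p] at hu1
      rw [hu2q] at hu2
      have h3p : u3 ≠ p := fun h => hu3 (h ▸ hc0p)
      have h3q : u3 ≠ q := fun h => hu3 (h ▸ hc0q)
      have hau3 : H.Adj a u3 := haAdj u3 (Finset.mem_erase.mpr ⟨h3p, hu3S⟩)
      have hbu3 : H.Adj b u3 := hbAdj u3 (Finset.mem_erase.mpr ⟨h3q, hu3S⟩)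
      have hbp : H.Adj b p := hbAdj p (Finset.mem_erase.mpr ⟨hpq, hpS⟩)
      have haq : H.Adj a q := haAdj q (Finset.mem_erase.mpr ⟨Ne.symm hpq, hqS⟩)
      have hab : a ≠ b := fun h => hu1 (h ▸ hbp)
      have hac : a ≠ c0 := fun h => hu1 (h ▸ hc0p)
      have hbc : b ≠ c0 := fun h => hu2 (h ▸ hc0q)
      have hpI := hSI hpS
      have hqI := hSI hqS
      have h3I := hSI hu3S
      exact absurd trivial (fun _ => sun_of_config H hfree p q u3 a b c0
        (hclC haC hbC hab) (hclC haC hc0C hac) (hclC hbC hc0C hbc)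
        (hindep p hpI q hqI) (hindep p hpI u3 h3I) (hindep q hqI u3 h3I)
        hpq (Ne.symm h3p) (Ne.symm h3q)
        (hne_IC hpI haC) (hne_IC hpI hbC) (hne_IC hpI hc0C)
        (hne_IC hqI haC) (hne_IC hqI hbC) (hne_IC hqI hc0C)
        (hne_IC h3I haC) (hne_IC h3I hbC) (hne_IC h3I hc0C)
        hbp.symm hc0p.symm (fun h => hu1 h.symm)
        haq.symm hc0q.symm (fun h => hu2 h.symm)
        hau3.symm hbu3.symm (fun h => hu3 h.symm))

lemma exists_adj_of_ne {H : SimpleGraph V} (hconn : H.Connected) {u v : V}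
    (hne : u ≠ v) : ∃ w, H.Adj u w := by
  obtain ⟨p⟩ := hconn.preconnected u v
  cases p with
  | nil => exact absurd rfl hne
  | cons h' _ => exact ⟨_, h'⟩

end AuxTrunk

theorem trunk_induced_in_root {V : Type} [Fintype V] (H : SimpleGraph V)
    (hsplit : IsSplit H) (hfree : Sun3Free H) (hconn : H.Connected)
    (G : SimpleGraph V) (hG : G = Gsq H) :
    cliqueIneq G ∧ InducedCopy (trunk G) H ∧
      ((core G).ncard = (maxCliques G).ncard → Nonempty (H ≃g trunk G)) := by
  subst hG
  classical
  set G := Gsq H with hGdef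
  have hneV : Nonempty V := hconn.nonempty
  -- Normalize the split partition so that every independent vertex has a
  -- neighbour and the clique side is nonempty.
  obtain ⟨C, I, hsp, hCne, hnbr⟩ :
      ∃ C I, IsSplitPart H C I ∧ C.Nonempty ∧ ∀ u ∈ I, ∃ c ∈ C, H.Adj c u := by
    obtain ⟨C0, I0, hunion0, hdisj0, hclC0, hindep0⟩ := hsplit
    by_cases hC0 : C0 = ∅
    · -- no clique side: the graph has no edges, hence is a single vertex
      have hIuniv : ∀ x : V, x ∈ I0 := by
        intro x
        have : x ∈ C0 ∪ I0 := by rw [hunion0]; trivial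
        rcases this with h | h
        · exact absurd h (by rw [hC0]; exact id)
        · exact h
      have hnoedge : ∀ a b : V, ¬ H.Adj a b := fun a b =>
        hindep0 a (hIuniv a) b (hIuniv b)
      refine ⟨Set.univ, ∅, ⟨by simp, by simp, ?_, by simp⟩, ⟨hneV.some, trivial⟩, by simp⟩
      intro x _ y _ hxy
      obtain ⟨w, hw⟩ := exists_adj_of_ne hconn hxy
      exact absurd hw (hnoedge x w)
    · refine ⟨C0, I0, ⟨hunion0, hdisj0, hclC0, hindep0⟩, Set.nonempty_iff_ne_empty.mpr hC0, ?_⟩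
      intro u hu
      obtain ⟨c0, hc0⟩ := Set.nonempty_iff_ne_empty.mpr hC0
      have hne : u ≠ c0 := by
        intro h
        exact Set.disjoint_left.mp hdisj0 (h ▸ hc0) hu
      obtain ⟨w, hw⟩ := exists_adj_of_ne hconn hne
      refine ⟨w, ?_, hw.symm⟩
      have : w ∈ C0 ∪ I0 := by rw [hunion0]; trivial
      rcases this with h | h
      · exact h
      · exact absurd hw (hindep0 u hu w h)
  obtain ⟨hunion, hdisj, hclC, hindep⟩ := hsp
  have hmem : ∀ x : V, x ∈ C ∨ x ∈ I := by
    intro x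
    have : x ∈ C ∪ I := by rw [hunion]; trivial
    exact this
  have hne_IC : ∀ {x y : V}, x ∈ I → y ∈ C → x ≠ y := by
    intro x y hx hy h
    subst h
    exact Set.disjoint_left.mp hdisj hy hx
  have nbrC : ∀ {c u : V}, u ∈ I → H.Adj c u → c ∈ C := by
    intro c u hu hadj
    rcases hmem c with h | h
    · exact h
    · exact absurd hadj (hindep c h u hu)
  -- every clique vertex is universal in G
  have huniv : ∀ c ∈ C, ∀ x : V, x ≠ c → G.Adj c x := by
    intro c hc x hx
    rcases hmem x with h | h
    · exact ⟨Ne.symm hx, Or.inl (hclC hc h (Ne.symm hx))⟩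
    · obtain ⟨c', hc'C, hc'x⟩ := hnbr x h
      by_cases hcc : c' = c
      · exact ⟨Ne.symm hx, Or.inl (hcc ▸ hc'x)⟩
      · exact ⟨Ne.symm hx, Or.inr ⟨c', hclC hc hc'C (Ne.symm hcc), hc'x⟩⟩
  -- the clique side is contained in every maximal clique of G
  have hCsub : ∀ Q ∈ maxCliques G, C ⊆ Q := by
    rintro Q ⟨hQcl, hQmax⟩ c hc
    have hclins : G.IsClique (insert c Q) := by
      refine hQcl.insert ?_
      intro y hy hcy
      exact huniv c hc y (Ne.symm hcy)
    have := hQmax (insert c Q) hclins (Set.subset_insert _ _)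
    rw [this]
    exact Set.mem_insert _ _
  have hCcore : C ⊆ core G := by
    intro c hc
    exact Set.mem_sInter.mpr (fun Q hQ => hCsub Q hQ hc)
  -- each maximal clique of G determines a clique vertex adjacent in H to
  -- exactly its independent part
  have hkey : ∀ Q ∈ maxCliques G, ∃ c ∈ C, ∀ v ∈ I, (H.Adj c v ↔ v ∈ Q) := by
    rintro Q ⟨hQcl, hQmax⟩
    have hfin : (Q ∩ I).Finite := Set.toFinite _
    have hSI : ↑hfin.toFinset ⊆ I := by
      intro x hx
      exact (hfin.mem_toFinset.mp hx).2
    have hpair : ∀ u ∈ hfin.toFinset, ∀ v ∈ hfin.toFinset,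
        ∃ c, H.Adj c u ∧ H.Adj c v := by
      intro u hu v hv
      obtain ⟨huQ, huI⟩ := hfin.mem_toFinset.mp hu
      obtain ⟨hvQ, hvI⟩ := hfin.mem_toFinset.mp hv
      by_cases huv : u = v
      · obtain ⟨c, hcC, hcu⟩ := hnbr u huI
        exact ⟨c, hcu, huv ▸ hcu⟩
      · obtain ⟨-, hor⟩ := hQcl huQ hvQ huv
        rcases hor with h | ⟨w, hw1, hw2⟩
        · exact absurd h (hindep u huI v hvI)
        · exact ⟨w, hw1.symm, hw2⟩
    obtain ⟨c, hcC, hcAdj⟩ := helly_of_sun3Free H C I hfree hunion hdisj hclC hindep hCne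
      hfin.toFinset hSI hpair
    refine ⟨c, hcC, ?_⟩
    intro v hv
    constructor
    · intro hadj
      have hclins : G.IsClique (insert v Q) := by
        refine hQcl.insert ?_
        intro y hy hvy
        rcases hmem y with h | h
        · exact (huniv y h v hvy).symm
        · exact ⟨hvy, Or.inr ⟨c, hadj.symm, hcAdj y (hfin.mem_toFinset.mpr ⟨hy, h⟩)⟩⟩
      have := hQmax (insert v Q) hclins (Set.subset_insert _ _)
      rw [this]
      exact Set.mem_insert _ _
    · intro hvQ
      exact hcAdj v (hfin.mem_toFinset.mpr ⟨hvQ, hv⟩)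
  -- choose the special vertex for each maximal clique
  let f : Set V → V := fun Q =>
    if h : Q ∈ maxCliques G then (hkey Q h).choose else hCne.choose
  have hfP : ∀ Q (h : Q ∈ maxCliques G),
      f Q ∈ C ∧ ∀ v ∈ I, (H.Adj (f Q) v ↔ v ∈ Q) := by
    intro Q h
    have := (hkey Q h).choose_spec
    simpa only [f, dif_pos h] using this
  have hQeq : ∀ Q ∈ maxCliques G, ∀ Q' ∈ maxCliques G,
      (∀ v ∈ I, v ∈ Q ↔ v ∈ Q') → Q = Q' := by
    intro Q hQ Q' hQ' hiff
    ext x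
    rcases hmem x with h | h
    · exact ⟨fun _ => hCsub Q' hQ' h, fun _ => hCsub Q hQ h⟩
    · exact hiff x h
  have hfInj : Set.InjOn f (maxCliques G) := by
    intro Q hQ Q' hQ' hfeq
    refine hQeq Q hQ Q' hQ' ?_
    intro v hv
    rw [← (hfP Q hQ).2 v hv, hfeq, (hfP Q' hQ').2 v hv]
  -- part 1 : the cardinality inequality
  have part1 : cliqueIneq G :=
    Set.ncard_le_ncard_of_injOn f (fun Q hQ => hCcore (hfP Q hQ).1) hfInj
      (Set.toFinite _)
  -- the embedding of the trunk
  let embf : (↥(maxCliques G) ⊕ ↥{v : V | v ∉ core G}) → V := fun x =>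
    match x with
    | .inl Q => f Q
    | .inr v => v
  have hnotcoreI : ∀ {v : V}, v ∉ core G → v ∈ I := by
    intro v hv
    rcases hmem v with h | h
    · exact absurd (hCcore h) hv
    · exact h
  have hembInj : Function.Injective embf := by
    rintro (⟨Q, hQ⟩ | ⟨v, hv⟩) (⟨Q', hQ'⟩ | ⟨v', hv'⟩) h
    · simp only [embf] at h
      exact congrArg Sum.inl (Subtype.ext (hfInj hQ hQ' h))
    · simp only [embf] at h
      exact absurd (hCcore (h ▸ (hfP Q hQ).1)) hv'
    · simp only [embf] at h
      exact absurd (hCcore (h.symm ▸ (hfP Q' hQ').1)) hv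
    · exact congrArg Sum.inr (Subtype.ext h)
  have hembIff : ∀ x y, (trunk G).Adj x y ↔ H.Adj (embf x) (embf y) := by
    rintro (⟨Q, hQ⟩ | ⟨v, hv⟩) (⟨Q', hQ'⟩ | ⟨v', hv'⟩)
    · -- clique-clique
      simp only [trunk, SimpleGraph.fromRel_adj, embf]
      constructor
      · rintro ⟨hne, -⟩
        have hQne : Q ≠ Q' := fun h => hne (by simp [h])
        have : f Q ≠ f Q' := fun h => hQne (hfInj hQ hQ' h)
        exact hclC (hfP Q hQ).1 (hfP Q' hQ').1 this
      · intro h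
        refine ⟨?_, Or.inl trivial⟩
        intro hc
        have : Q = Q' := by simpa using hc
        exact h.ne (by rw [this])
    · -- clique-independent
      simp only [trunk, SimpleGraph.fromRel_adj, embf]
      have hvI := hnotcoreI hv'
      rw [(hfP Q hQ).2 v' hvI]
      constructor
      · rintro ⟨-, h | h⟩
        · exact h
        · exact h.elim
      · intro h
        exact ⟨by simp, Or.inl h⟩
    · -- independent-clique
      simp only [trunk, SimpleGraph.fromRel_adj, embf]
      have hvI := hnotcoreI hv
      constructor
      · rintro ⟨-, h | h⟩
        · exact h.elim
        · exact (((hfP Q' hQ').2 v hvI).mpr h).symm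
      · intro h
        exact ⟨by simp, Or.inr (((hfP Q' hQ').2 v hvI).mp h.symm)⟩
    · -- independent-independent
      simp only [trunk, SimpleGraph.fromRel_adj, embf]
      constructor
      · rintro ⟨-, h | h⟩ <;> exact h.elim
      · intro h
        exact absurd h (hindep v (hnotcoreI hv) v' (hnotcoreI hv'))
  have part2 : InducedCopy (trunk G) H := ⟨⟨embf, hembInj⟩, hembIff⟩
  refine ⟨part1, part2, ?_⟩
  -- part 3 : the equality case
  intro hcard
  have hCfin : C.Finite := Set.toFinite _
  have hcorefin : (core G).Finite := Set.toFinite _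
  have hmcfin : (maxCliques G).Finite := Set.toFinite _
  have h1 : (maxCliques G).ncard ≤ C.ncard :=
    Set.ncard_le_ncard_of_injOn f (fun Q hQ => (hfP Q hQ).1) hfInj hCfin
  have h2 : C.ncard ≤ (core G).ncard := Set.ncard_le_ncard hCcore hcorefin
  have hCcoreEq : C = core G := by
    apply Set.eq_of_subset_of_ncard_le hCcore _ hcorefin
    omega
  have himg : f '' maxCliques G = C := by
    have hnc : (f '' maxCliques G).ncard = (maxCliques G).ncard :=
      Set.ncard_image_of_injOn hfInj
    exact Set.eq_of_subset_of_ncard_le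
      (fun x ⟨Q, hQ, hfQ⟩ => hfQ ▸ (hfP Q hQ).1) (by omega) hCfin
  have hsurj : ∀ v ∈ C, ∃ Q, Q ∈ maxCliques G ∧ f Q = v := by
    intro v hv
    rw [← himg] at hv
    obtain ⟨Q, hQ, hfQ⟩ := hv
    exact ⟨Q, hQ, hfQ⟩
  have hsurj' : ∀ v, ∃ Q, v ∈ C → Q ∈ maxCliques G ∧ f Q = v := by
    intro v
    by_cases h : v ∈ C
    · obtain ⟨Q, hQ, hf⟩ := hsurj v h
      exact ⟨Q, fun _ => ⟨hQ, hf⟩⟩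
    · exact ⟨∅, fun h' => absurd h' h⟩
  choose Qof hQof using hsurj'
  have hnotcore : ∀ {v : V}, v ∉ C → v ∉ core G := by
    intro v h
    rwa [← hCcoreEq]
  let toFun : V → (↥(maxCliques G) ⊕ ↥{v : V | v ∉ core G}) := fun v =>
    if h : v ∈ C then Sum.inl ⟨Qof v, (hQof v h).1⟩
    else Sum.inr ⟨v, hnotcore h⟩
  have htf1 : ∀ v (h : v ∈ C), toFun v = Sum.inl ⟨Qof v, (hQof v h).1⟩ :=
    fun v h => dif_pos h
  have htf2 : ∀ v (h : v ∉ C), toFun v = Sum.inr ⟨v, hnotcore h⟩ :=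
    fun v h => dif_neg h
  have hleft : ∀ v, embf (toFun v) = v := by
    intro v
    by_cases h : v ∈ C
    · rw [htf1 v h]
      exact (hQof v h).2
    · rw [htf2 v h]
  have hright : ∀ x, toFun (embf x) = x := by
    rintro (⟨Q, hQ⟩ | ⟨v, hv⟩)
    · have hfC : f Q ∈ C := (hfP Q hQ).1
      show toFun (f Q) = Sum.inl ⟨Q, hQ⟩
      rw [htf1 (f Q) hfC]
      exact congrArg Sum.inl (Subtype.ext
        (hfInj (hQof (f Q) hfC).1 hQ (hQof (f Q) hfC).2))
    · have hvC : v ∉ C := fun h => hv (hCcoreEq ▸ h)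
      show toFun v = Sum.inr ⟨v, hv⟩
      rw [htf2 v hvC]
  refine ⟨⟨⟨toFun, embf, fun v => hleft v, fun x => hright x⟩, ?_⟩⟩
  intro a b
  show (trunk G).Adj (toFun a) (toFun b) ↔ H.Adj a b
  rw [hembIff (toFun a) (toFun b), hleft a, hleft b]
end

section
/- Let 𝒢 be a simple hereditary class of 3-sun-free split graphs and let G be a connected graph. Then G has a square root in 𝒢 if and only if |⋂𝒞(G)| ≥ |𝒞(G)| and T(G) ∈ 𝒢. -/
open SimpleGraph

/- ------------- auxiliary ---------------- -/

lemma Gsq_adj {V : Type} (H : SimpleGraph V) (u v : V) :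
    (Gsq H).Adj u v ↔ u ≠ v ∧ (H.Adj u v ∨ ∃ w, H.Adj u w ∧ H.Adj w v) := Iff.rfl

def isoOfAdjIff {γ δ : Type} {P : SimpleGraph γ} {R : SimpleGraph δ} (e : γ ≃ δ)
    (h : ∀ a b, P.Adj a b ↔ R.Adj (e a) (e b)) : P ≃g R :=
  ⟨e, fun {a b} => (h a b).symm⟩

lemma InducedCopy.trans {α β γ : Type} {F : SimpleGraph α} {G : SimpleGraph β}
    {K : SimpleGraph γ} (h1 : InducedCopy F G) (h2 : InducedCopy G K) : InducedCopy F K := by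
  obtain ⟨f, hf⟩ := h1; obtain ⟨g, hg⟩ := h2
  exact ⟨f.trans g, fun a b => (hf a b).trans (hg _ _)⟩

lemma inducedCopy_of_iso {α β : Type} {F : SimpleGraph α} {G : SimpleGraph β}
    (e : F ≃g G) : InducedCopy F G :=
  ⟨e.toEquiv.toEmbedding, fun a b => (e.map_rel_iff (a := a) (b := b)).symm⟩

lemma joinG_adj_ll {α β : Type} {A : SimpleGraph α} {B : SimpleGraph β} {x y : α} :
    (joinG A B).Adj (.inl x) (.inl y) ↔ A.Adj x y := by
  constructor
  · rintro ⟨h1, h2 | h2⟩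
    · exact h2
    · exact h2.symm
  · intro h; exact ⟨by simp [h.ne], Or.inl h⟩

lemma joinG_adj_rr {α β : Type} {A : SimpleGraph α} {B : SimpleGraph β} {x y : β} :
    (joinG A B).Adj (.inr x) (.inr y) ↔ B.Adj x y := by
  constructor
  · rintro ⟨h1, h2 | h2⟩
    · exact h2
    · exact h2.symm
  · intro h; exact ⟨by simp [h.ne], Or.inl h⟩

lemma joinG_adj_lr {α β : Type} {A : SimpleGraph α} {B : SimpleGraph β} {x : α} {y : β} :
    (joinG A B).Adj (.inl x) (.inr y) := ⟨by simp, Or.inl trivial⟩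

lemma joinG_adj_rl {α β : Type} {A : SimpleGraph α} {B : SimpleGraph β} {x : β} {y : α} :
    (joinG A B).Adj (.inr x) (.inl y) := ⟨by simp, Or.inr trivial⟩

lemma trunk_adj_ll {V : Type} {G : SimpleGraph V} {Q R : ↥(maxCliques G)} :
    (trunk G).Adj (.inl Q) (.inl R) ↔ Q ≠ R := by
  constructor
  · rintro ⟨h1, -⟩ rfl; exact h1 rfl
  · intro h; exact ⟨by simpa using h, Or.inl trivial⟩

lemma trunk_adj_lr {V : Type} {G : SimpleGraph V} {Q : ↥(maxCliques G)}
    {v : ↥{v : V | v ∉ core G}} :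
    (trunk G).Adj (.inl Q) (.inr v) ↔ (v : V) ∈ (Q : Set V) := by
  constructor
  · rintro ⟨h1, h2 | h2⟩
    · exact h2
    · exact h2.elim
  · intro h; exact ⟨by simp, Or.inl h⟩

lemma trunk_adj_rl {V : Type} {G : SimpleGraph V} {Q : ↥(maxCliques G)}
    {v : ↥{v : V | v ∉ core G}} :
    (trunk G).Adj (.inr v) (.inl Q) ↔ (v : V) ∈ (Q : Set V) := by
  rw [SimpleGraph.adj_comm]; exact trunk_adj_lr

lemma trunk_adj_rr {V : Type} {G : SimpleGraph V} {u v : ↥{v : V | v ∉ core G}} :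
    ¬ (trunk G).Adj (.inr u) (.inr v) := by
  rintro ⟨h1, h2 | h2⟩ <;> exact h2

/- maximal clique basics -/

lemma exists_maxClique_superset {V : Type} [Finite V] (G : SimpleGraph V) {K : Set V}
    (hK : G.IsClique K) : ∃ Q ∈ maxCliques G, K ⊆ Q := by
  obtain ⟨Q, hQ, hmax⟩ := Set.Finite.exists_maximalFor id {R : Set V | G.IsClique R ∧ K ⊆ R}
    (Set.toFinite _) ⟨K, hK, subset_rfl⟩
  refine ⟨Q, ⟨hQ.1, fun R hR hQR => ?_⟩, hQ.2⟩
  exact Set.Subset.antisymm hQR (hmax ⟨hR, hQ.2.trans hQR⟩ hQR)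

lemma exists_maxClique_mem {V : Type} [Finite V] (G : SimpleGraph V) (v : V) :
    ∃ Q ∈ maxCliques G, v ∈ Q := by
  obtain ⟨Q, hQ, hsub⟩ := exists_maxClique_superset G (K := {v}) (by
    intro a ha b hb hab; simp at ha hb; exact absurd (ha.trans hb.symm) hab)
  exact ⟨Q, hQ, hsub rfl⟩

lemma adj_iff_common_maxClique {V : Type} [Finite V] (G : SimpleGraph V) (u v : V) :
    G.Adj u v ↔ u ≠ v ∧ ∃ Q ∈ maxCliques G, u ∈ Q ∧ v ∈ Q := by
  constructor
  · intro h
    refine ⟨h.ne, ?_⟩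
    have hK : G.IsClique {u, v} := by
      intro a ha b hb hab
      simp only [Set.mem_insert_iff, Set.mem_singleton_iff] at ha hb
      rcases ha with rfl | rfl <;> rcases hb with rfl | rfl
      · exact absurd rfl hab
      · exact h
      · exact h.symm
      · exact absurd rfl hab
    obtain ⟨Q, hQ, hsub⟩ := exists_maxClique_superset G hK
    exact ⟨Q, hQ, hsub (by simp), hsub (by simp)⟩
  · rintro ⟨hne, Q, hQ, hu, hv⟩
    exact hQ.1 hu hv hne

lemma core_mem_universal {V : Type} [Finite V] (G : SimpleGraph V) {v : V} (hv : v ∈ core G)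
    {u : V} (hu : u ≠ v) : G.Adj u v := by
  obtain ⟨Q, hQ, huQ⟩ := exists_maxClique_mem G u
  exact hQ.1 huQ (hv Q hQ) hu

lemma universal_mem_core {V : Type} {G : SimpleGraph V} {c : V}
    (hc : ∀ u, u ≠ c → G.Adj u c) : c ∈ core G := by
  intro Q hQ
  have hclique : G.IsClique (Q ∪ {c}) := by
    intro a ha b hb hab
    simp only [Set.union_singleton, Set.mem_insert_iff] at ha hb
    rcases ha with rfl | ha <;> rcases hb with rfl | hb
    · exact absurd rfl hab
    · exact (hc b (Ne.symm hab)).symm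
    · exact hc a hab
    · exact hQ.1 ha hb hab
  have := hQ.2 _ hclique Set.subset_union_left
  rw [this]; exact Or.inr rfl

/- ---------- join iso machinery ---------- -/

def topIso {γ δ : Type} (e : γ ≃ δ) : (⊤ : SimpleGraph γ) ≃g (⊤ : SimpleGraph δ) :=
  isoOfAdjIff e (by intro a b; simp [top_adj, e.injective.ne_iff])

def joinGCongr {α α' β β' : Type} {A : SimpleGraph α} {A' : SimpleGraph α'}
    {B : SimpleGraph β} {B' : SimpleGraph β'} (eA : A ≃g A') (eB : B ≃g B') :
    joinG A B ≃g joinG A' B' :=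
  isoOfAdjIff (Equiv.sumCongr eA.toEquiv eB.toEquiv) (by
    rintro (a | a) (b | b) <;>
      simp [joinG_adj_ll, joinG_adj_rr, joinG_adj_lr, joinG_adj_rl, eA.map_rel_iff, eB.map_rel_iff])

def joinGAssoc {α β γ : Type} (A : SimpleGraph α) (B : SimpleGraph β) (C : SimpleGraph γ) :
    joinG (joinG A B) C ≃g joinG A (joinG B C) :=
  isoOfAdjIff (Equiv.sumAssoc α β γ) (by
    rintro ((a | a) | a) ((b | b) | b) <;>
      simp [joinG_adj_ll, joinG_adj_rr, joinG_adj_lr, joinG_adj_rl, Equiv.sumAssoc])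

def joinGComm {α β : Type} (A : SimpleGraph α) (B : SimpleGraph β) :
    joinG A B ≃g joinG B A :=
  isoOfAdjIff (Equiv.sumComm α β) (by
    rintro (a | a) (b | b) <;>
      simp [joinG_adj_ll, joinG_adj_rr, joinG_adj_lr, joinG_adj_rl])

lemma joinG_top_top {α β : Type} :
    joinG (⊤ : SimpleGraph α) (⊤ : SimpleGraph β) = (⊤ : SimpleGraph (α ⊕ β)) := by
  ext a b
  rw [top_adj _ _]
  constructor
  · exact fun h => h.ne
  · intro h
    rcases a with a | a <;> rcases b with b | b
    · exact joinG_adj_ll.2 ((top_adj _ _).2 (fun hab => h (by rw [hab])))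
    · exact joinG_adj_lr
    · exact joinG_adj_rl
    · exact joinG_adj_rr.2 ((top_adj _ _).2 (fun hab => h (by rw [hab])))

/- ---------- structure of G and of Gsq (trunk G) ---------- -/

lemma Gsq_trunk_lr {V : Type} [Finite V] (G : SimpleGraph V) (Q : ↥(maxCliques G))
    (v : ↥{v : V | v ∉ core G}) : (Gsq (trunk G)).Adj (.inl Q) (.inr v) := by
  refine ⟨by simp, ?_⟩
  obtain ⟨R, hR, hvR⟩ := exists_maxClique_mem G (v : V)
  by_cases hvQ : (v : V) ∈ (Q : Set V)
  · exact Or.inl (trunk_adj_lr.2 hvQ)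
  · refine Or.inr ⟨.inl ⟨R, hR⟩, trunk_adj_ll.2 ?_, trunk_adj_lr.2 hvR⟩
    intro h
    rw [h] at hvQ
    exact hvQ hvR

lemma Gsq_trunk_eq {V : Type} [Finite V] (G : SimpleGraph V) :
    Gsq (trunk G) = joinG (⊤ : SimpleGraph ↥(maxCliques G))
      (G.induce {v : V | v ∉ core G}) := by
  ext a b
  rcases a with Q | u <;> rcases b with R | v
  · rw [joinG_adj_ll, top_adj _ _]
    constructor
    · rintro ⟨h1, -⟩ rfl; exact h1 rfl
    · intro h
      exact ⟨by simpa using h, Or.inl (trunk_adj_ll.2 h)⟩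
  · simp only [joinG_adj_lr, iff_true]
    exact Gsq_trunk_lr G Q v
  · simp only [joinG_adj_rl, iff_true]
    exact (Gsq_trunk_lr G R u).symm
  · rw [joinG_adj_rr, comap_adj]
    constructor
    · rintro ⟨h1, h2 | ⟨w, hw1, hw2⟩⟩
      · exact absurd h2 (trunk_adj_rr)
      · rcases w with S | w
        · have h1' : (u : V) ≠ (v : V) := fun h => h1 (congrArg Sum.inr (Subtype.ext h))
          exact (adj_iff_common_maxClique G u v).2
            ⟨h1', S, S.2, trunk_adj_rl.1 hw1, trunk_adj_lr.1 hw2⟩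
        · exact absurd hw1 (trunk_adj_rr)
    · intro h
      obtain ⟨hne, S, hS, huS, hvS⟩ := (adj_iff_common_maxClique G u v).1 h
      exact ⟨fun hc => hne (congrArg Subtype.val (Sum.inr_injective hc)),
        Or.inr ⟨.inl ⟨S, hS⟩, trunk_adj_rl.2 huS, trunk_adj_lr.2 hvS⟩⟩

noncomputable def coreSplitEquiv {V : Type} (G : SimpleGraph V) :
    ↥(core G) ⊕ ↥{v : V | v ∉ core G} ≃ V := by
  classical
  exact (Equiv.sumCongr (Equiv.refl _)
    (Equiv.setCongr (by rw [Set.compl_def]))).symm.symm.trans (Equiv.Set.sumCompl (core G))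

noncomputable def joinCoreIso {V : Type} [Finite V] (G : SimpleGraph V) :
    joinG (⊤ : SimpleGraph ↥(core G)) (G.induce {v : V | v ∉ core G}) ≃g G := by
  classical
  refine isoOfAdjIff (coreSplitEquiv G) ?_
  have hc : ∀ x : ↥(core G), (coreSplitEquiv G) (.inl x) = (x : V) := fun x => rfl
  have hi : ∀ x : ↥{v : V | v ∉ core G}, (coreSplitEquiv G) (.inr x) = (x : V) := fun x => rfl
  rintro (a | a) (b | b)
  · rw [joinG_adj_ll, top_adj _ _, hc, hc]
    constructor
    · intro h
      exact core_mem_universal G b.2 (fun hc => h (Subtype.ext hc))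
    · intro h
      exact fun hab => h.ne (congrArg Subtype.val hab)
  · simp only [joinG_adj_lr, true_iff, hc, hi]
    exact (core_mem_universal G a.2 (fun h : (b:V) = (a:V) => b.2 (by rw [h]; exact a.2))).symm
  · simp only [joinG_adj_rl, true_iff, hc, hi]
    exact core_mem_universal G b.2 (fun h : (a:V) = (b:V) => a.2 (by rw [h]; exact b.2))
  · rw [joinG_adj_rr, comap_adj, hi, hi]
    exact Iff.rfl

/-- iteration of the simple-class map -/
lemma simple_iterate {𝒢 : ∀ α : Type, SimpleGraph α → Prop} (hsimp : SimpleClass 𝒢)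
    {γ : Type} {T : SimpleGraph γ} (hT : 𝒢 γ T) (n : ℕ) :
    ∃ (β : Type) (H' : SimpleGraph β), 𝒢 β H' ∧
      Nonempty (Gsq H' ≃g joinG (⊤ : SimpleGraph (Fin n)) (Gsq T)) := by
  induction n with
  | zero =>
    refine ⟨γ, T, hT, ⟨?_⟩⟩
    refine isoOfAdjIff (Equiv.emptySum (Fin 0) γ).symm ?_
    intro a b
    rw [show (Equiv.emptySum (Fin 0) γ).symm a = Sum.inr a from rfl,
      show (Equiv.emptySum (Fin 0) γ).symm b = Sum.inr b from rfl, joinG_adj_rr]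
  | succ n ih =>
    obtain ⟨β, H', hH', ⟨e⟩⟩ := ih
    obtain ⟨β', H'', hH'', ⟨e'⟩⟩ := hsimp β H' hH'
    refine ⟨β', H'', hH'', ⟨?_⟩⟩
    have i1 : joinG (Gsq H') (⊤ : SimpleGraph (Fin 1)) ≃g
        joinG (joinG (⊤ : SimpleGraph (Fin n)) (Gsq T)) (⊤ : SimpleGraph (Fin 1)) :=
      joinGCongr e Iso.refl
    have i2 : joinG (joinG (⊤ : SimpleGraph (Fin n)) (Gsq T)) (⊤ : SimpleGraph (Fin 1)) ≃g
        joinG (⊤ : SimpleGraph (Fin n)) (joinG (⊤ : SimpleGraph (Fin 1)) (Gsq T)) :=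
      (joinGAssoc _ _ _).trans (joinGCongr Iso.refl (joinGComm _ _))
    have i3 : joinG (⊤ : SimpleGraph (Fin n)) (joinG (⊤ : SimpleGraph (Fin 1)) (Gsq T)) ≃g
        joinG (joinG (⊤ : SimpleGraph (Fin n)) (⊤ : SimpleGraph (Fin 1))) (Gsq T) :=
      (joinGAssoc _ _ _).symm
    have i4 : joinG (joinG (⊤ : SimpleGraph (Fin n)) (⊤ : SimpleGraph (Fin 1))) (Gsq T) ≃g
        joinG (⊤ : SimpleGraph (Fin (n + 1))) (Gsq T) := by
      rw [joinG_top_top]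
      exact joinGCongr (topIso finSumFinEquiv) Iso.refl
    exact e'.trans (i1.trans (i2.trans (i3.trans i4)))

lemma backward_dir {𝒢 : ∀ α : Type, SimpleGraph α → Prop} (hsimp : SimpleClass 𝒢)
    {V : Type} [Finite V] (G : SimpleGraph V) (hineq : cliqueIneq G)
    (htr : 𝒢 _ (trunk G)) :
    ∃ (α : Type) (H : SimpleGraph α), 𝒢 α H ∧ Nonempty (G ≃g Gsq H) := by
  set d := (core G).ncard - (maxCliques G).ncard with hd
  obtain ⟨β, H', hH', ⟨e⟩⟩ := simple_iterate hsimp htr d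
  refine ⟨β, H', hH', ?_⟩
  rw [Gsq_trunk_eq] at e
  have ecard : Nonempty ((Fin d ⊕ ↥(maxCliques G)) ≃ ↥(core G)) := by
    rw [← Finite.card_eq, Nat.card_sum, Nat.card_eq_fintype_card, Fintype.card_fin,
      Nat.card_coe_set_eq, Nat.card_coe_set_eq, hd]
    have := hineq
    unfold cliqueIneq at this
    omega
  obtain ⟨ec⟩ := ecard
  have i1 : joinG (⊤ : SimpleGraph (Fin d))
      (joinG (⊤ : SimpleGraph ↥(maxCliques G)) (G.induce {v : V | v ∉ core G})) ≃g
      joinG (joinG (⊤ : SimpleGraph (Fin d)) (⊤ : SimpleGraph ↥(maxCliques G)))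
        (G.induce {v : V | v ∉ core G}) := (joinGAssoc _ _ _).symm
  have i2 : joinG (joinG (⊤ : SimpleGraph (Fin d)) (⊤ : SimpleGraph ↥(maxCliques G)))
        (G.induce {v : V | v ∉ core G}) ≃g
      joinG (⊤ : SimpleGraph ↥(core G)) (G.induce {v : V | v ∉ core G}) := by
    rw [joinG_top_top]
    exact joinGCongr (topIso ec) Iso.refl
  exact ⟨(((e.trans i1).trans i2).trans (joinCoreIso G)).symm⟩

/- ---------- sun graph lemmas and the Helly property ---------- -/

lemma sun3_ll {i j : Fin 3} : ¬ (sunGraph 3).Adj (.inl i) (.inl j) := by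
  rintro ⟨h1, h2 | h2⟩ <;> exact h2

lemma sun3_rr {i j : Fin 3} : (sunGraph 3).Adj (.inr i) (.inr j) ↔ i ≠ j := by
  constructor
  · rintro ⟨h1, -⟩ rfl; exact h1 rfl
  · intro h; exact ⟨by simpa using h, Or.inl trivial⟩

lemma sun3_lr {i j : Fin 3} :
    (sunGraph 3).Adj (.inl i) (.inr j) ↔ ((j : ℕ) = i ∨ (j : ℕ) = ((i : ℕ) + 1) % 3) := by
  constructor
  · rintro ⟨h1, h2 | h2⟩
    · exact h2
    · exact h2.elim
  · intro h; exact ⟨by simp, Or.inl h⟩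

lemma sun3_rl {i j : Fin 3} :
    (sunGraph 3).Adj (.inr i) (.inl j) ↔ ((i : ℕ) = j ∨ (i : ℕ) = ((j : ℕ) + 1) % 3) := by
  rw [SimpleGraph.adj_comm]; exact sun3_lr

lemma helly {V' : Type} {H : SimpleGraph V'} {C I : Set V'} (hsp : IsSplitPart H C I)
    (hsun : Sun3Free H) :
    ∀ (n : ℕ) (S : Finset V'), S.card = n → (∀ u ∈ S, u ∈ I) →
      (∀ u ∈ S, ∀ v ∈ S, ∃ c, H.Adj u c ∧ H.Adj c v) → S.Nonempty →
      ∃ c ∈ C, ∀ u ∈ S, H.Adj u c := by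
  classical
  obtain ⟨hcover, hdisj, hclique, hindep⟩ := hsp
  have hCI : ∀ {x u : V'}, u ∈ I → H.Adj u x → x ∈ C := by
    intro x u huI hadj
    have hx : x ∈ C ∪ I := hcover ▸ Set.mem_univ x
    rcases hx with hx | hx
    · exact hx
    · exact absurd hadj (hindep u huI x hx)
  intro n
  induction n using Nat.strong_induction_on with
  | _ n ih =>
    intro S hcard hSI hpair hne
    match hn : n, hcard with
    | 0, hcard => exact absurd (Finset.card_eq_zero.1 hcard) (Finset.nonempty_iff_ne_empty.1 hne)
    | 1, hcard =>
      obtain ⟨u, rfl⟩ := Finset.card_eq_one.1 hcard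
      obtain ⟨c, hc1, hc2⟩ := hpair u (by simp) u (by simp)
      refine ⟨c, hCI (hSI u (by simp)) hc1, ?_⟩
      intro x hx
      rw [Finset.mem_singleton] at hx
      subst hx; exact hc1
    | 2, hcard =>
      obtain ⟨u, v, huv, rfl⟩ := Finset.card_eq_two.1 hcard
      obtain ⟨c, hc1, hc2⟩ := hpair u (by simp) v (by simp)
      refine ⟨c, hCI (hSI u (by simp)) hc1, ?_⟩
      intro x hx
      rw [Finset.mem_insert, Finset.mem_singleton] at hx
      rcases hx with rfl | rfl
      · exact hc1
      · exact hc2.symm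
    | (m + 3), hcard => ?_
    by_contra hcon
    push_neg at hcon
    -- auxiliary: for each x ∈ S get a near-common neighbor
    have aux : ∀ x ∈ S, ∃ c ∈ C, (∀ v ∈ S.erase x, H.Adj v c) ∧ ¬ H.Adj x c := by
      intro x hx
      have hcard' : (S.erase x).card = m + 2 := by
        rw [Finset.card_erase_of_mem hx, hcard]
        omega
      obtain ⟨c, hcC, hc⟩ := ih (m + 2) (by omega) (S.erase x) hcard'
        (fun u hu => hSI u (Finset.mem_of_mem_erase hu))
        (fun u hu v hv => hpair u (Finset.mem_of_mem_erase hu) v (Finset.mem_of_mem_erase hv))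
        (Finset.card_pos.1 (by omega))
      refine ⟨c, hcC, hc, ?_⟩
      intro hxc
      obtain ⟨u, hu, hnadj⟩ := hcon c hcC
      by_cases hux : u = x
      · exact hnadj (hux ▸ hxc)
      · exact hnadj (hc u (Finset.mem_erase.2 ⟨hux, hu⟩))
    -- three distinct vertices of S
    obtain ⟨u1, hu1⟩ := hne
    obtain ⟨u2, hu2'⟩ := Finset.card_pos.1 (show 0 < (S.erase u1).card by
      rw [Finset.card_erase_of_mem hu1, hcard]; omega)
    obtain ⟨u3, hu3'⟩ := Finset.card_pos.1 (show 0 < ((S.erase u1).erase u2).card by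
      rw [Finset.card_erase_of_mem hu2', Finset.card_erase_of_mem hu1, hcard]; omega)
    obtain ⟨hne21, hu2⟩ := Finset.mem_erase.1 hu2'
    obtain ⟨hne32, hu3''⟩ := Finset.mem_erase.1 hu3'
    obtain ⟨hne31, hu3⟩ := Finset.mem_erase.1 hu3''
    obtain ⟨c1, hc1C, hc1a, hc1n⟩ := aux u1 hu1
    obtain ⟨c2, hc2C, hc2a, hc2n⟩ := aux u2 hu2
    obtain ⟨c3, hc3C, hc3a, hc3n⟩ := aux u3 hu3
    set u : Fin 3 → V' := ![u1, u2, u3] with hu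
    set c : Fin 3 → V' := ![c1, c2, c3] with hc
    have huS : ∀ i, u i ∈ S := by
      intro i; fin_cases i
      exacts [hu1, hu2, hu3]
    have huI : ∀ i, u i ∈ I := fun i => hSI _ (huS i)
    have hcC : ∀ i, c i ∈ C := by
      intro i; fin_cases i
      exacts [hc1C, hc2C, hc3C]
    have huinj : ∀ i j : Fin 3, i ≠ j → u i ≠ u j := by
      intro i j hij
      fin_cases i <;> fin_cases j <;> try exact absurd rfl hij
      exacts [hne21.symm, hne31.symm, hne21, hne32.symm, hne31, hne32]
    have hadjn : ∀ i, ¬ H.Adj (u i) (c i) := by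
      intro i; fin_cases i
      exacts [hc1n, hc2n, hc3n]
    have hadjy : ∀ i j : Fin 3, i ≠ j → H.Adj (u i) (c j) := by
      intro i j hij
      have h1 : u i ≠ u j := huinj i j hij
      have h2 : u i ∈ S := huS i
      fin_cases j
      · exact hc1a _ (Finset.mem_erase.2 ⟨h1, h2⟩)
      · exact hc2a _ (Finset.mem_erase.2 ⟨h1, h2⟩)
      · exact hc3a _ (Finset.mem_erase.2 ⟨h1, h2⟩)
    have hcinj : ∀ i j : Fin 3, i ≠ j → c i ≠ c j := by
      intro i j hij heq
      have := hadjy j i (Ne.symm hij)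
      rw [heq] at this
      exact hadjn j this
    have hucne : ∀ i j, u i ≠ c j := by
      intro i j heq
      exact (Set.disjoint_right.1 hdisj (huI i)) (heq ▸ hcC j)
    set f : Fin 3 ⊕ Fin 3 → V' := Sum.elim u (fun j => c (j + 1)) with hf
    have finj : Function.Injective f := by
      rintro (i | i) (j | j) h
      · by_contra h'
        exact huinj i j (fun he => h' (congrArg Sum.inl he)) h
      · exact absurd h (hucne i (j + 1))
      · exact absurd h.symm (hucne j (i + 1))
      · by_contra h'
        have hij : i + 1 ≠ j + 1 := fun he => h' (congrArg Sum.inr (by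
          have := add_right_cancel he; exact this))
        exact hcinj _ _ hij h
    have hiff : ∀ a b, (sunGraph 3).Adj a b ↔ H.Adj (f a) (f b) := by
      have key : ∀ i j : Fin 3, H.Adj (u i) (c j) ↔ i ≠ j :=
        fun i j => ⟨fun h he => hadjn j (he ▸ h), hadjy i j⟩
      have keyc : ∀ i j : Fin 3, H.Adj (c i) (c j) ↔ i ≠ j := by
        intro i j
        constructor
        · intro h he; exact h.ne (he ▸ rfl)
        · intro he; exact hclique (hcC i) (hcC j) (hcinj i j he)
      rintro (i | i) (j | j)
      · simp only [hf, Sum.elim_inl]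
        exact iff_of_false sun3_ll (hindep _ (huI i) _ (huI j))
      · rw [sun3_lr]
        simp only [hf, Sum.elim_inl, Sum.elim_inr, key]
        revert i j; decide
      · rw [sun3_rl]
        simp only [hf, Sum.elim_inl, Sum.elim_inr]
        rw [SimpleGraph.adj_comm, key]
        revert i j; decide
      · rw [sun3_rr]
        simp only [hf, Sum.elim_inr, keyc]
        constructor
        · intro h he; exact h (add_right_cancel he)
        · intro h he; exact h (by rw [he])
    exact hsun ⟨⟨f, finj⟩, hiff⟩

/- ---------- forward direction ---------- -/

lemma Gsq_comap_equiv {V α : Type} (e : V ≃ α) (H : SimpleGraph α) :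
    Gsq (H.comap e) = (Gsq H).comap e := by
  ext u v
  simp only [comap_adj, Gsq_adj]
  constructor
  · rintro ⟨h1, h2 | ⟨w, hw1, hw2⟩⟩
    · exact ⟨fun h => h1 (e.injective h), Or.inl h2⟩
    · exact ⟨fun h => h1 (e.injective h), Or.inr ⟨e w, hw1, hw2⟩⟩
  · rintro ⟨h1, h2 | ⟨w, hw1, hw2⟩⟩
    · exact ⟨fun h => h1 (congrArg e h), Or.inl h2⟩
    · refine ⟨fun h => h1 (congrArg e h), Or.inr ⟨e.symm w, ?_, ?_⟩⟩
      · simpa using hw1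
      · simpa using hw2

lemma forward_dir {𝒢 : ∀ α : Type, SimpleGraph α → Prop}
    (hmem : ∀ (α : Type) (H : SimpleGraph α), 𝒢 α H → Finite α ∧ IsSplit H ∧ Sun3Free H)
    (hher : Hereditary 𝒢) {V : Type} [Finite V] (G : SimpleGraph V) (hconn : G.Connected)
    {α : Type} (H : SimpleGraph α) (hH : 𝒢 α H) (iso : G ≃g Gsq H) :
    cliqueIneq G ∧ 𝒢 _ (trunk G) := by
  classical
  -- pull H back to V
  set H₀ : SimpleGraph V := H.comap iso.toEquiv with hH₀def
  have hH₀ : 𝒢 V H₀ := hher V α H₀ H hH ⟨iso.toEquiv.toEmbedding, fun a b => Iff.rfl⟩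
  obtain ⟨-, ⟨C', I', hsp'⟩, hsun'⟩ := hmem α H hH
  have hsun : Sun3Free H₀ := fun hcopy =>
    hsun' (hcopy.trans ⟨iso.toEquiv.toEmbedding, fun a b => Iff.rfl⟩)
  set C : Set V := ⇑iso.toEquiv ⁻¹' C' with hCdef
  set I : Set V := ⇑iso.toEquiv ⁻¹' I' with hIdef
  have hsp : IsSplitPart H₀ C I := by
    obtain ⟨h1, h2, h3, h4⟩ := hsp'
    refine ⟨?_, ?_, ?_, ?_⟩
    · rw [hCdef, hIdef, ← Set.preimage_union, h1, Set.preimage_univ]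
    · exact Disjoint.preimage _ h2
    · intro x hx y hy hxy
      exact h3 hx hy (fun h => hxy (iso.toEquiv.injective h))
    · intro a ha b hb
      exact h4 _ ha _ hb
  have hGeq : G = Gsq H₀ := by
    rw [hH₀def, Gsq_comap_equiv]
    ext u v
    rw [comap_adj]
    exact (iso.map_rel_iff (a := u) (b := v)).symm
  clear_value H₀ C I
  subst hGeq
  obtain ⟨hcover, hdisj, hclique, hindep⟩ := hsp
  have hCI : ∀ {x u : V}, u ∈ I → H₀.Adj u x → x ∈ C := by
    intro x u huI hadj
    have hx : x ∈ C ∪ I := hcover ▸ Set.mem_univ x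
    rcases hx with hx | hx
    · exact hx
    · exact absurd hadj (hindep u huI x hx)
  set G' := Gsq H₀ with hG'def
  by_cases hdeg : G'.IsClique Set.univ
  · -- degenerate case: G' is complete
    have hmax : maxCliques G' = {Set.univ} := by
      ext Q
      constructor
      · intro hQ
        exact hQ.2 Set.univ hdeg (Set.subset_univ Q)
      · rintro rfl
        exact ⟨hdeg, fun R hR hsub => (Set.univ_subset_iff.1 hsub).symm⟩
    have hcore : core G' = Set.univ := by
      rw [core, hmax, Set.sInter_singleton]
    have hVne : Nonempty V := hconn.nonempty
    constructor
    · rw [cliqueIneq, hmax, hcore, Set.ncard_singleton, Set.ncard_univ]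
      exact Nat.one_le_iff_ne_zero.2 (Nat.card_pos).ne'
    · haveI hIE : IsEmpty ↥{v : V | v ∉ core G'} :=
        ⟨fun x => x.2 (Set.eq_univ_iff_forall.1 hcore (x : V))⟩
      haveI hsub : Subsingleton ↥(maxCliques G') := by
        constructor
        rintro ⟨as, ha⟩ ⟨bs, hb⟩
        rw [hmax, Set.mem_singleton_iff] at ha hb
        subst ha; subst hb; rfl
      haveI : Subsingleton (↥(maxCliques G') ⊕ ↥{v : V | v ∉ core G'}) := by
        constructor
        rintro (a | a) (b | b)
        · rw [Subsingleton.elim a b]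
        · exact hIE.elim b
        · exact hIE.elim a
        · exact hIE.elim a
      obtain ⟨v₀⟩ := hVne
      refine hher _ _ (trunk G') H₀ hH₀ ⟨⟨fun _ => v₀, fun a b _ => Subsingleton.elim a b⟩, ?_⟩
      intro a b
      rw [Subsingleton.elim a b]
      show (trunk G').Adj b b ↔ H₀.Adj v₀ v₀
      exact iff_of_false ((trunk G').irrefl) (H₀.irrefl)
  · -- main case
    -- a non-adjacent pair exists
    have hpairex : ∃ a b : V, a ≠ b ∧ ¬ G'.Adj a b := by
      by_contra hcon
      push_neg at hcon
      exact hdeg (fun a _ b _ hab => hcon a b hab)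
    obtain ⟨a0, b0, hab0, hnadj0⟩ := hpairex
    have hnbr : ∀ u : V, ∃ x, G'.Adj u x := by
      intro u
      have ht : ∃ t, t ≠ u := by
        by_cases h : a0 = u
        · exact ⟨b0, fun hb => hab0 (h.trans hb.symm)⟩
        · exact ⟨a0, h⟩
      obtain ⟨t, ht⟩ := ht
      obtain ⟨w⟩ := hconn u t
      cases w with
      | nil => exact absurd rfl ht.symm
      | cons h p => exact ⟨_, h⟩
    have hnbrH : ∀ u ∈ I, ∃ c ∈ C, H₀.Adj u c := by
      intro u huI
      obtain ⟨x, hx⟩ := hnbr u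
      rcases hx.2 with h | ⟨w, hw1, hw2⟩
      · exact ⟨x, hCI huI h, h⟩
      · exact ⟨w, hCI huI hw1, hw1⟩
    have hIC : ∀ u ∈ I, ∀ c ∈ C, u ≠ c → G'.Adj u c := by
      intro u huI c hcC hne
      obtain ⟨w, hwC, hw⟩ := hnbrH u huI
      by_cases hwc : w = c
      · exact ⟨hne, Or.inl (hwc ▸ hw)⟩
      · exact ⟨hne, Or.inr ⟨w, hw, hclique hwC hcC hwc⟩⟩
    have hCuniv : ∀ c ∈ C, ∀ u, u ≠ c → G'.Adj u c := by
      intro c hcC u hne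
      have hu : u ∈ C ∪ I := hcover ▸ Set.mem_univ u
      rcases hu with hu | hu
      · exact ⟨hne, Or.inl (hclique hu hcC hne)⟩
      · exact hIC u hu c hcC hne
    have hCcore : C ⊆ core G' := fun c hc => universal_mem_core (hCuniv c hc)
    have hIne : ∃ u₀, u₀ ∈ I := by
      by_contra hcon
      push_neg at hcon
      refine hdeg (fun x _ y _ hxy => ?_)
      have hx : x ∈ C ∪ I := hcover ▸ Set.mem_univ x
      have hy : y ∈ C ∪ I := hcover ▸ Set.mem_univ y
      rcases hx with hx | hx
      · rcases hy with hy | hy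
        · exact ⟨hxy, Or.inl (hclique hx hy hxy)⟩
        · exact absurd hy (hcon y)
      · exact absurd hx (hcon x)
    obtain ⟨u₀, hu₀⟩ := hIne
    -- every maximal clique meets I
    have hQI : ∀ Q ∈ maxCliques G', ((Q ∩ I : Set V)).Nonempty := by
      intro Q hQ
      by_contra hcon
      push_neg at hcon
      have hQC : Q ⊆ C := by
        intro x hx
        have : x ∈ C ∪ I := hcover ▸ Set.mem_univ x
        rcases this with h | h
        · exact h
        · exact absurd (⟨hx, h⟩ : x ∈ Q ∩ I) (Set.eq_empty_iff_forall_notMem.1 hcon x)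
      have hu₀Q : u₀ ∉ Q := fun h =>
        Set.eq_empty_iff_forall_notMem.1 hcon u₀ ⟨h, hu₀⟩
      have hbig : G'.IsClique (Q ∪ {u₀}) := by
        intro x hx y hy hxy
        simp only [Set.union_singleton, Set.mem_insert_iff] at hx hy
        rcases hx with rfl | hx <;> rcases hy with rfl | hy
        · exact absurd rfl hxy
        · exact (hIC x hu₀ y (hQC hy) hxy)
        · exact (hIC y hu₀ x (hQC hx) (Ne.symm hxy)).symm
        · exact hQ.1 hx hy hxy
      have := hQ.2 _ hbig Set.subset_union_left
      exact hu₀Q (by rw [this]; exact Or.inr rfl)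
    -- choose a private center for each maximal clique
    have hQc : ∀ Q : ↥(maxCliques G'), ∃ c ∈ C, ∀ u ∈ (Q : Set V) ∩ I, H₀.Adj u c := by
      intro ⟨Q, hQ⟩
      have hfin : (Q ∩ I : Set V).Finite := Set.toFinite _
      have hSI : ∀ u ∈ hfin.toFinset, u ∈ I := fun u hu => ((hfin.mem_toFinset.1 hu)).2
      have hpair : ∀ u ∈ hfin.toFinset, ∀ v ∈ hfin.toFinset,
          ∃ c, H₀.Adj u c ∧ H₀.Adj c v := by
        intro u hu v hv
        rw [hfin.mem_toFinset] at hu hv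
        by_cases huv : u = v
        · subst huv
          obtain ⟨c, hcC, hc⟩ := hnbrH u hu.2
          exact ⟨c, hc, hc.symm⟩
        · have hadj : G'.Adj u v := hQ.1 hu.1 hv.1 huv
          rcases hadj.2 with h | ⟨w, hw1, hw2⟩
          · exact absurd h (hindep u hu.2 v hv.2)
          · exact ⟨w, hw1, hw2⟩
      obtain ⟨c, hcC, hc⟩ := helly ⟨hcover, hdisj, hclique, hindep⟩ hsun
        hfin.toFinset.card hfin.toFinset rfl hSI hpair
        (hfin.toFinset_nonempty.2 (hQI Q hQ))
      exact ⟨c, hcC, fun u hu => hc u (hfin.mem_toFinset.2 hu)⟩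
    choose cmap hcmapC hcmapA using hQc
    have hext : ∀ (Q : ↥(maxCliques G')) (v : V), H₀.Adj (cmap Q) v → v ∉ C →
        v ∈ (Q : Set V) := by
      intro Q v hadj hvC
      have hvI : v ∈ I := by
        have hm : v ∈ C ∪ I := hcover ▸ Set.mem_univ v
        rcases hm with h | h
        · exact absurd h hvC
        · exact h
      by_contra hv
      have hbig : G'.IsClique ((Q : Set V) ∪ {v}) := by
        intro x hx y hy hxy
        simp only [Set.union_singleton, Set.mem_insert_iff] at hx hy
        rcases hx with rfl | hx <;> rcases hy with rfl | hy
        · exact absurd rfl hxy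
        · by_cases hyC : y ∈ C
          · exact hIC x hvI y hyC hxy
          · have hyI : y ∈ I := by
              have hm : y ∈ C ∪ I := hcover ▸ Set.mem_univ y
              rcases hm with h | h
              · exact absurd h hyC
              · exact h
            exact ⟨hxy, Or.inr ⟨cmap Q, hadj.symm, (hcmapA Q y ⟨hy, hyI⟩).symm⟩⟩
        · by_cases hxC : x ∈ C
          · exact (hIC y hvI x hxC (Ne.symm hxy)).symm
          · have hxI : x ∈ I := by
              have hm : x ∈ C ∪ I := hcover ▸ Set.mem_univ x
              rcases hm with h | h
              · exact absurd h hxC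
              · exact h
            exact ⟨hxy, Or.inr ⟨cmap Q, (hcmapA Q x ⟨hx, hxI⟩), hadj⟩⟩
        · exact Q.2.1 hx hy hxy
      have heq := Q.2.2 _ hbig Set.subset_union_left
      exact hv (by rw [heq]; exact Or.inr rfl)
    have hinj : Function.Injective cmap := by
      intro Q R heq
      have hbig : G'.IsClique ((Q : Set V) ∪ (R : Set V)) := by
        have hkey : ∀ x ∈ (Q : Set V) ∪ (R : Set V), x ∉ C → H₀.Adj x (cmap Q) := by
          intro x hx hxC
          have hxI : x ∈ I := by
            have hm : x ∈ C ∪ I := hcover ▸ Set.mem_univ x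
            rcases hm with h | h
            · exact absurd h hxC
            · exact h
          rcases hx with hx | hx
          · exact hcmapA Q x ⟨hx, hxI⟩
          · rw [heq]; exact hcmapA R x ⟨hx, hxI⟩
        intro x hx y hy hxy
        by_cases hxC : x ∈ C <;> by_cases hyC : y ∈ C
        · exact ⟨hxy, Or.inl (hclique hxC hyC hxy)⟩
        · have hy' := hkey y hy hyC
          by_cases hxc : x = cmap Q
          · exact ⟨hxy, Or.inl (hxc ▸ hy'.symm)⟩
          · exact ⟨hxy, Or.inr ⟨cmap Q, hclique hxC (hcmapC Q) hxc, hy'.symm⟩⟩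
        · have hx' := hkey x hx hxC
          by_cases hyc : y = cmap Q
          · exact ⟨hxy, Or.inl (hyc ▸ hx')⟩
          · exact ⟨hxy, Or.inr ⟨cmap Q, hx', (hclique hyC (hcmapC Q) hyc).symm⟩⟩
        · exact ⟨hxy, Or.inr ⟨cmap Q, hkey x hx hxC, (hkey y hy hyC).symm⟩⟩
      have h1 : (Q : Set V) = (Q : Set V) ∪ (R : Set V) :=
        Q.2.2 _ hbig Set.subset_union_left
      have h2 : (R : Set V) = (Q : Set V) ∪ (R : Set V) :=
        R.2.2 _ hbig Set.subset_union_right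
      exact Subtype.ext (h1.trans h2.symm)
    constructor
    · have hle : Nat.card ↥(maxCliques G') ≤ Nat.card ↥(core G') := by
        refine Nat.card_le_card_of_injective
          (fun Q => (⟨cmap Q, hCcore (hcmapC Q)⟩ : ↥(core G'))) ?_
        intro Q R h
        exact hinj (congrArg Subtype.val h)
      rwa [Nat.card_coe_set_eq, Nat.card_coe_set_eq] at hle
    · set f : ↥(maxCliques G') ⊕ ↥{v : V | v ∉ core G'} → V :=
        Sum.elim (fun Q => cmap Q) Subtype.val with hfdef
      have hnotC : ∀ v : ↥{v : V | v ∉ core G'}, (v : V) ∉ C := fun v hv => v.2 (hCcore hv)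
      have hmemI : ∀ v : ↥{v : V | v ∉ core G'}, (v : V) ∈ I := by
        intro v
        have : (v : V) ∈ C ∪ I := hcover ▸ Set.mem_univ _
        rcases this with h | h
        · exact absurd h (hnotC v)
        · exact h
      have hQmem : ∀ (Q : ↥(maxCliques G')) (v : ↥{v : V | v ∉ core G'}),
          (v : V) ∈ (Q : Set V) ↔ H₀.Adj (cmap Q) (v : V) := by
        intro Q v
        constructor
        · intro hv
          exact (hcmapA Q _ ⟨hv, hmemI v⟩).symm
        · intro hadj
          exact hext Q _ hadj (hnotC v)
      have finj : Function.Injective f := by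
        rintro (Q | v) (R | w) h <;>
          simp only [hfdef, Sum.elim_inl, Sum.elim_inr] at h
        · rw [congrArg Sum.inl (hinj h)]
        · exact absurd (hCcore (h ▸ hcmapC Q)) w.2
        · exact absurd (hCcore (h.symm ▸ hcmapC R)) v.2
        · rw [congrArg Sum.inr (Subtype.ext h)]
      refine hher _ _ (trunk G') H₀ hH₀ ⟨⟨f, finj⟩, ?_⟩
      rintro (Q | v) (R | w)
      · rw [trunk_adj_ll]
        simp only [hfdef, Sum.elim_inl]
        constructor
        · intro h
          exact hclique (hcmapC Q) (hcmapC R) (fun he => h (hinj he))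
        · intro h he
          exact h.ne (by rw [he])
      · rw [trunk_adj_lr]
        simp only [hfdef, Sum.elim_inl, Sum.elim_inr]
        exact hQmem Q w
      · rw [trunk_adj_rl]
        simp only [hfdef, Sum.elim_inl, Sum.elim_inr]
        rw [SimpleGraph.adj_comm]
        exact hQmem R v
      · simp only [hfdef, Sum.elim_inr]
        exact iff_of_false trunk_adj_rr (hindep _ (hmemI v) _ (hmemI w))

theorem root_in_simple_class_iff (𝒢 : ∀ α : Type, SimpleGraph α → Prop)
    (hmem : ∀ (α : Type) (H : SimpleGraph α), 𝒢 α H → Finite α ∧ IsSplit H ∧ Sun3Free H)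
    (hher : Hereditary 𝒢) (hsimp : SimpleClass 𝒢)
    {V : Type} [Fintype V] (G : SimpleGraph V) (hconn : G.Connected) :
    (∃ (α : Type) (H : SimpleGraph α), 𝒢 α H ∧ Nonempty (G ≃g Gsq H)) ↔
      cliqueIneq G ∧ 𝒢 _ (trunk G) := by
  constructor
  · rintro ⟨α, H, hH, ⟨iso⟩⟩
    exact forward_dir hmem hher G hconn H hH iso
  · rintro ⟨h1, h2⟩
    exact backward_dir hsimp G h1 h2
end
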